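/- Every set of at least 9 pairwise distinct nonzero vectors in F_2^6 contains 4 pairwise distinct vectors that are linearly dependent over F_2. -/

import Mathlib

set_option maxHeartbeats 1000000

private lemma zmod2_cases (x : ZMod 2) : x = 0 ∨ x = 1 := by
  revert x; decide

/-- Hamming weight of a vector in `F₂^9`. -/
private def wt (x : Fin 9 → ZMod 2) : ℕ := (Finset.univ.filter fun i => x i = 1).card

private abbrev P2 : Type := ZMod 2 × ZMod 2 × ZMod 2

/-- Key combinatorial lemma: there are no three linearly independent vectors in `F₂^9`
all of whose nontrivial combinations have Hamming weight at least 5.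
(Nonexistence of a binary `[9,3,5]` code.) -/
private lemma key (u v w : Fin 9 → ZMod 2)
    (hne : ∀ a b c : ZMod 2, a • u + b • v + c • w = 0 → a = 0 ∧ b = 0 ∧ c = 0)
    (h5 : ∀ a b c : ZMod 2, ¬(a = 0 ∧ b = 0 ∧ c = 0) →
      5 ≤ wt (a • u + b • v + c • w)) : False := by
  classical
  set combo : P2 → (Fin 9 → ZMod 2) := fun p => p.1 • u + p.2.1 • v + p.2.2 • w with hcombo
  have hadd : ∀ p q : P2, combo (p + q) = combo p + combo q := by
    intro p q
    simp only [hcombo, Prod.fst_add, Prod.snd_add, add_smul]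
    abel
  have h5' : ∀ p : P2, p ≠ 0 → 5 ≤ wt (combo p) := by
    rintro ⟨a, b, c⟩ hp
    refine h5 a b c ?_
    rintro ⟨rfl, rfl, rfl⟩
    exact hp (by decide)
  set s : Finset P2 := Finset.univ.erase 0 with hs
  have hdec : ∀ a b c : ZMod 2,
      (∑ p ∈ Finset.univ.erase (0 : P2),
        if p.1 * a + p.2.1 * b + p.2.2 * c = 1 then (1 : ℕ) else 0) ≤ 4 := by decide
  have hcoord : ∀ i : Fin 9, (∑ p ∈ s, if combo p i = 1 then (1 : ℕ) else 0) ≤ 4 := by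
    intro i
    simpa only [hcombo, Pi.add_apply, Pi.smul_apply, smul_eq_mul] using hdec (u i) (v i) (w i)
  have htotal : (∑ p ∈ s, wt (combo p)) ≤ 36 := by
    calc (∑ p ∈ s, wt (combo p))
        = ∑ p ∈ s, ∑ i : Fin 9, (if combo p i = 1 then (1 : ℕ) else 0) :=
          Finset.sum_congr rfl fun p _ => Finset.card_filter _ _
      _ = ∑ i : Fin 9, ∑ p ∈ s, (if combo p i = 1 then (1 : ℕ) else 0) := Finset.sum_comm
      _ ≤ ∑ _i : Fin 9, 4 := Finset.sum_le_sum fun i _ => hcoord i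
      _ = 36 := by simp
  have hscard : s.card = 7 := by rw [hs]; decide
  have huniq : ∀ p q : P2, p ≠ 0 → q ≠ 0 → p ≠ q →
      6 ≤ wt (combo p) → 6 ≤ wt (combo q) → False := by
    intro p q hp hq hpq h6p h6q
    have hps : p ∈ s := Finset.mem_erase.mpr ⟨hp, Finset.mem_univ _⟩
    have hqs : q ∈ s.erase p :=
      Finset.mem_erase.mpr ⟨Ne.symm hpq, Finset.mem_erase.mpr ⟨hq, Finset.mem_univ _⟩⟩
    have h1 : ∑ r ∈ s, wt (combo r) = wt (combo p) + ∑ r ∈ s.erase p, wt (combo r) :=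
      (Finset.add_sum_erase s _ hps).symm
    have h2 : ∑ r ∈ s.erase p, wt (combo r)
        = wt (combo q) + ∑ r ∈ (s.erase p).erase q, wt (combo r) :=
      (Finset.add_sum_erase _ _ hqs).symm
    have hcard : ((s.erase p).erase q).card = 5 := by
      rw [Finset.card_erase_of_mem hqs, Finset.card_erase_of_mem hps, hscard]
    have h3 : 5 * 5 ≤ ∑ r ∈ (s.erase p).erase q, wt (combo r) := by
      have hb := Finset.card_nsmul_le_sum ((s.erase p).erase q) (fun r => wt (combo r)) 5
        (fun r hr => h5' r (Finset.mem_erase.mp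
          (Finset.mem_of_mem_erase (Finset.mem_of_mem_erase hr) : r ∈ s)).1)
      simpa [hcard] using hb
    omega
  have hwt_cast : ∀ x : Fin 9 → ZMod 2, ((wt x : ℕ) : ZMod 2) = ∑ i, x i := by
    intro x
    rw [wt, Finset.card_filter, Nat.cast_sum]
    refine Finset.sum_congr rfl fun i _ => ?_
    rcases zmod2_cases (x i) with h | h <;> simp [h]
  have hline : ∀ p q : P2, p ≠ 0 → q ≠ 0 → p + q ≠ 0 →
      wt (combo p) ≤ 5 → wt (combo q) ≤ 5 → wt (combo (p + q)) ≤ 5 → False := by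
    intro p q hp hq hpq h1 h2 h3
    have e1 : wt (combo p) = 5 := le_antisymm h1 (h5' p hp)
    have e2 : wt (combo q) = 5 := le_antisymm h2 (h5' q hq)
    have e3 : wt (combo (p + q)) = 5 := le_antisymm h3 (h5' _ hpq)
    have hsum : (∑ i, combo (p + q) i) = (∑ i, combo p i) + ∑ i, combo q i := by
      rw [hadd]
      simp [Finset.sum_add_distrib]
    rw [← hwt_cast, ← hwt_cast, ← hwt_cast, e1, e2, e3] at hsum
    revert hsum; decide
  by_cases hex : ∃ z : P2, z ≠ 0 ∧ 6 ≤ wt (combo z)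
  · obtain ⟨z, hz, hz6⟩ := hex
    have hnh : ∀ q : P2, q ≠ 0 → q ≠ z → wt (combo q) ≤ 5 := by
      intro q h1 h2
      by_contra h
      exact huniq q z h1 hz h2 (by omega) hz6
    obtain ⟨a, b, c⟩ := z
    rcases zmod2_cases a with rfl | rfl <;> rcases zmod2_cases b with rfl | rfl <;>
      rcases zmod2_cases c with rfl | rfl
    · exact hz rfl
    · exact hline (1, 0, 0) (0, 1, 0) (by decide) (by decide) (by decide)
        (hnh _ (by decide) (by decide)) (hnh _ (by decide) (by decide))
        (hnh _ (by decide) (by decide))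
    · exact hline (1, 0, 0) (0, 0, 1) (by decide) (by decide) (by decide)
        (hnh _ (by decide) (by decide)) (hnh _ (by decide) (by decide))
        (hnh _ (by decide) (by decide))
    · exact hline (1, 0, 0) (0, 1, 0) (by decide) (by decide) (by decide)
        (hnh _ (by decide) (by decide)) (hnh _ (by decide) (by decide))
        (hnh _ (by decide) (by decide))
    · exact hline (0, 1, 0) (0, 0, 1) (by decide) (by decide) (by decide)
        (hnh _ (by decide) (by decide)) (hnh _ (by decide) (by decide))
        (hnh _ (by decide) (by decide))
    · exact hline (1, 0, 0) (0, 1, 0) (by decide) (by decide) (by decide)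
        (hnh _ (by decide) (by decide)) (hnh _ (by decide) (by decide))
        (hnh _ (by decide) (by decide))
    · exact hline (1, 0, 0) (0, 0, 1) (by decide) (by decide) (by decide)
        (hnh _ (by decide) (by decide)) (hnh _ (by decide) (by decide))
        (hnh _ (by decide) (by decide))
    · exact hline (1, 0, 0) (0, 1, 0) (by decide) (by decide) (by decide)
        (hnh _ (by decide) (by decide)) (hnh _ (by decide) (by decide))
        (hnh _ (by decide) (by decide))
  · push_neg at hex
    have hle : ∀ p : P2, p ≠ 0 → wt (combo p) ≤ 5 := fun p hp =>
      Nat.lt_succ_iff.mp (hex p hp)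
    exact hline (1, 0, 0) (0, 1, 0) (by decide) (by decide) (by decide)
      (hle _ (by decide)) (hle _ (by decide)) (hle _ (by decide))

/-- Any set of at least 9 pairwise distinct nonzero vectors in `F₂^6` contains
4 pairwise distinct vectors that are linearly dependent over `F₂`. -/
theorem exists_four_linearDependent_of_nine_nonzero
    (T : Finset (Fin 6 → ZMod 2)) (hcard : 9 ≤ T.card)
    (hne : ∀ v ∈ T, v ≠ 0) :
    ∃ S ⊆ T, S.card = 4 ∧
      ¬ LinearIndependent (ZMod 2) (fun v : S => (v : Fin 6 → ZMod 2)) := by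
  classical
  by_contra hcon
  push_neg at hcon
  -- Every nonempty subset of `T` of cardinality at most 4 has nonzero sum.
  have hsum : ∀ A : Finset (Fin 6 → ZMod 2), A ⊆ T → A.Nonempty → A.card ≤ 4 →
      ∑ x ∈ A, x ≠ 0 := by
    intro A hAT hA hA4 hzero
    obtain ⟨S, hAS, hST, hS4⟩ := Finset.exists_subsuperset_card_eq hAT hA4 (by omega)
    have hind := hcon S hST hS4
    rw [Fintype.linearIndependent_iff] at hind
    obtain ⟨v0, hv0⟩ := hA
    have key := hind (fun v => if (v : Fin 6 → ZMod 2) ∈ A then 1 else 0) ?_ ⟨v0, hAS hv0⟩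
    · simp only [hv0, if_pos] at key
      exact one_ne_zero key
    · calc ∑ i : S, (if (i : Fin 6 → ZMod 2) ∈ A then (1 : ZMod 2) else 0) • (i : Fin 6 → ZMod 2)
          = ∑ x ∈ S, (if x ∈ A then (1 : ZMod 2) else 0) • x :=
            Finset.sum_attach S (fun x => (if x ∈ A then (1 : ZMod 2) else 0) • x)
        _ = ∑ x ∈ S ∩ A, x := by
            simp only [ite_smul, one_smul, zero_smul]
            exact Finset.sum_ite_mem S A _
        _ = ∑ x ∈ A, x := by rw [Finset.inter_eq_right.mpr hAS]
        _ = 0 := hzero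
  -- Fix 9 distinct elements of `T`.
  obtain ⟨T', hT'sub, hT'card⟩ := Finset.exists_subset_card_eq hcard
  let e := Finset.equivFinOfCardEq hT'card
  let t : Fin 9 → (Fin 6 → ZMod 2) := fun i => (e.symm i : Fin 6 → ZMod 2)
  have htinj : Function.Injective t := fun i j h =>
    e.symm.injective (Subtype.coe_injective h)
  have htmem : ∀ i, t i ∈ T := fun i => hT'sub (e.symm i).2
  -- The linear map recording dependencies among the `t i`.
  let φ : (Fin 9 → ZMod 2) →ₗ[ZMod 2] (Fin 6 → ZMod 2) :=
    { toFun := fun c => ∑ i, c i • t i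
      map_add' := fun x y => by
        simp [Pi.add_apply, add_smul, Finset.sum_add_distrib]
      map_smul' := fun r x => by
        simp [Pi.smul_apply, smul_eq_mul, mul_smul, Finset.smul_sum] }
  have hrk := LinearMap.finrank_range_add_finrank_ker φ
  have hdom : Module.finrank (ZMod 2) (Fin 9 → ZMod 2) = 9 := by
    simp [Module.finrank_pi]
  have hcod : Module.finrank (ZMod 2) (Fin 6 → ZMod 2) = 6 := by
    simp [Module.finrank_pi]
  have hrange : Module.finrank (ZMod 2) (LinearMap.range φ) ≤ 6 :=
    le_trans (Submodule.finrank_le _) (le_of_eq hcod)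
  have hker : 3 ≤ Module.finrank (ZMod 2) (LinearMap.ker φ) := by omega
  -- Pick three linearly independent elements of the kernel.
  let b := Module.finBasis (ZMod 2) (LinearMap.ker φ)
  let f : Fin 3 → LinearMap.ker φ := fun i => b (Fin.castLE hker i)
  have hfli : LinearIndependent (ZMod 2) f :=
    b.linearIndependent.comp _ ((Fin.strictMono_castLE hker).injective)
  have hli : LinearIndependent (ZMod 2) fun i => ((f i : Fin 9 → ZMod 2)) := by
    have := hfli.map' (LinearMap.ker φ).subtype (Submodule.ker_subtype _)
    exact this
  set u : Fin 9 → ZMod 2 := (f 0 : Fin 9 → ZMod 2) with hu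
  set v : Fin 9 → ZMod 2 := (f 1 : Fin 9 → ZMod 2) with hv
  set w : Fin 9 → ZMod 2 := (f 2 : Fin 9 → ZMod 2) with hw
  have hne' : ∀ a b c : ZMod 2, a • u + b • v + c • w = 0 → a = 0 ∧ b = 0 ∧ c = 0 := by
    intro a b' c h
    rw [Fintype.linearIndependent_iff] at hli
    have h0 := hli ![a, b', c] (by
      rw [Fin.sum_univ_three]
      simpa using h)
    exact ⟨h0 0, h0 1, h0 2⟩
  refine key u v w hne' ?_
  intro a b' c habc
  set z : Fin 9 → ZMod 2 := a • u + b' • v + c • w with hz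
  have hzker : z ∈ LinearMap.ker φ := by
    rw [hz]
    exact Submodule.add_mem _ (Submodule.add_mem _
      (Submodule.smul_mem _ _ (f 0).2) (Submodule.smul_mem _ _ (f 1).2))
      (Submodule.smul_mem _ _ (f 2).2)
  have hzne : z ≠ 0 := fun h0 => habc (hne' a b' c (hz ▸ h0))
  by_contra hlt
  have hwt4 : (Finset.univ.filter fun i => z i = 1).card ≤ 4 := by
    have : wt z ≤ 4 := by omega
    simpa [wt] using this
  set A : Finset (Fin 9) := Finset.univ.filter fun i => z i = 1 with hA
  have hAne : A.Nonempty := by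
    obtain ⟨i, hi⟩ := Function.ne_iff.mp hzne
    refine ⟨i, Finset.mem_filter.mpr ⟨Finset.mem_univ _, ?_⟩⟩
    rcases zmod2_cases (z i) with h | h
    · exact absurd h hi
    · exact h
  set S' : Finset (Fin 6 → ZMod 2) := A.image t with hS'
  have hS'sub : S' ⊆ T := by
    intro x hx
    obtain ⟨i, _, rfl⟩ := Finset.mem_image.mp hx
    exact htmem i
  have hS'card : S'.card ≤ 4 := by
    rw [hS', Finset.card_image_of_injective _ htinj]
    exact hwt4
  have hS'zero : ∑ x ∈ S', x = 0 := by
    have h1 : ∑ x ∈ S', x = ∑ i ∈ A, t i :=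
      Finset.sum_image fun i _ j _ h => htinj h
    have h2 : ∑ i ∈ A, t i = ∑ i ∈ A, z i • t i := by
      refine Finset.sum_congr rfl fun i hi => ?_
      have : z i = 1 := (Finset.mem_filter.mp hi).2
      rw [this, one_smul]
    have h3 : ∑ i ∈ A, z i • t i = ∑ i, z i • t i := by
      refine Finset.sum_subset (Finset.subset_univ A) fun i _ hiA => ?_
      have hzi : z i ≠ 1 := fun h => hiA (Finset.mem_filter.mpr ⟨Finset.mem_univ _, h⟩)
      rcases zmod2_cases (z i) with h | h
      · rw [h, zero_smul]
      · exact absurd h hzi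
    have h4 : ∑ i, z i • t i = 0 := hzker
    rw [h1, h2, h3, h4]
  exact hsum S' hS'sub (hAne.image t) hS'card hS'zero
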